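/- arXiv:2309.09491 — 3 statements merged into one kernel-verified Lean document; each statement's English description precedes it below -/
import Mathlib

section
/- Let p be an odd prime. Then (2^(p-1) - 1)/p ≡ ∑_{j odd, 1 ≤ j < p-1} 1/j (mod p), and also (2^(p-1) - 1)/p ≡ -(1/2) · ∑_{j=1}^{(p-1)/2} 1/j (mod p). -/
/-- Rational congruence: `x ≡ y (mod m)` means that `x - y`, written in lowest
terms, has numerator divisible by `m`. -/
def ratModEq (m : ℕ) (x y : ℚ) : Prop := (m : ℤ) ∣ (x - y).num

/-!
Write `q = (2^(p-1) - 1)/p`, and let `T`, `E` be the sums of `1/k` over the odd, resp. even,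
`0 < k < p`. Binomial expansion gives `2q = (2^p - 2)/p = ∑_{0<k<p} C(p,k)/p`, and
`C(p,k)/p = C(p-1,k-1)/k ≡ (-1)^(k-1)/k`, so `2q ≡ T - E`. Pairing `k` with `p - k` shows that
the harmonic sum `T + E` is `≡ 0`. Hence `2q ≡ 2T ≡ -2E`, and `2E` is the harmonic sum up to
`(p-1)/2`. All congruences are read off the `p`-adic norm: `x ≡ y` once `|x - y|_p < 1`.
-/

open Finset

theorem Nat.Prime.choose_pred_eq_neg_one_pow {p : ℕ} (hp : p.Prime) {k : ℕ} (hk : k < p) :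
    ((p - 1).choose k : ZMod p) = (-1) ^ k := by
  induction k with
  | zero => simp
  | succ k ih =>
    have hpascal := Nat.choose_succ_succ' (p - 1) k
    rw [Nat.sub_add_cancel hp.one_le] at hpascal
    have hvanish : (p.choose (k + 1) : ZMod p) = 0 :=
      (ZMod.natCast_eq_zero_iff _ _).2 (hp.dvd_choose_self k.succ_ne_zero hk)
    rw [hpascal, Nat.cast_add, ih (by omega)] at hvanish
    linear_combination hvanish

theorem choose_div_self_eq {n k : ℕ} (hn : 0 < n) (hk : 0 < k) :
    (n.choose k : ℚ) / n = ((n - 1).choose (k - 1) : ℚ) / k := by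
  obtain ⟨m, rfl⟩ := Nat.exists_eq_add_of_lt hn
  obtain ⟨j, rfl⟩ := Nat.exists_eq_add_of_lt hk
  have h := Nat.add_one_mul_choose_eq m j
  simp only [zero_add, Nat.add_sub_cancel] at h ⊢
  rw [div_eq_div_iff (by positivity) (by positivity)]
  exact_mod_cast h.symm.trans (mul_comm _ _)

theorem sum_Ico_choose {n : ℕ} (hn : 0 < n) : ∑ k ∈ Ico 1 n, (n.choose k : ℚ) = 2 ^ n - 2 := by
  have h := Nat.sum_range_choose n
  rw [sum_range_succ, sum_range_eq_add_Ico _ hn] at h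
  have h' : ((1 + ∑ k ∈ Ico 1 n, n.choose k + 1 : ℕ) : ℚ) = 2 ^ n := by
    simpa using congrArg (Nat.cast : ℕ → ℚ) h
  push_cast at h'
  linarith

theorem two_mul_fermat_quotient_two_eq {p : ℕ} (hp : 0 < p) :
    2 * ((2 ^ (p - 1) - 1 : ℚ) / p) = ∑ k ∈ Ico 1 p, (p.choose k : ℚ) / p := by
  rw [← sum_div, sum_Ico_choose hp, ← pow_sub_one_mul hp.ne']
  ring

theorem sum_filter_odd_add_sum_filter_even (s : Finset ℕ) (f : ℕ → ℚ) :
    ∑ k ∈ s with Odd k, f k + ∑ k ∈ s with Even k, f k = ∑ k ∈ s, f k := by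
  simp only [← Nat.not_odd_iff_even, sum_filter_add_sum_filter_not]

theorem sum_neg_one_pow_succ_div (s : Finset ℕ) :
    ∑ k ∈ s, (-1 : ℚ) ^ (k + 1) / k =
      ∑ k ∈ s with Odd k, (1 : ℚ) / k - ∑ k ∈ s with Even k, (1 : ℚ) / k := by
  rw [← sum_filter_odd_add_sum_filter_even s, sub_eq_add_neg, ← sum_neg_distrib]
  congr 1 <;> refine sum_congr rfl fun k hk => ?_ <;> rw [mem_filter] at hk
  · rw [hk.2.add_one.neg_one_pow]
  · rw [hk.2.add_one.neg_one_pow, neg_div]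

theorem sum_filter_even_Ico_one_div (n : ℕ) :
    ∑ k ∈ Ico 1 n with Even k, (1 : ℚ) / k = 1 / 2 * ∑ j ∈ Icc 1 ((n - 1) / 2), (1 : ℚ) / j := by
  have hevens : {k ∈ Ico 1 n | Even k} = (Icc 1 ((n - 1) / 2)).image (2 * ·) := by
    ext k
    simp only [mem_filter, mem_Ico, mem_image, mem_Icc, even_iff_two_dvd]
    constructor
    · rintro ⟨hk, j, rfl⟩
      exact ⟨j, by omega, rfl⟩
    · rintro ⟨j, hj, rfl⟩
      exact ⟨by omega, j, rfl⟩
  rw [hevens, sum_image fun _ _ _ _ h => by simpa using h, mul_sum]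
  refine sum_congr rfl fun j _ => ?_
  push_cast
  ring

theorem filter_odd_Icc_sub_two {n : ℕ} (hn : Odd n) :
    {j ∈ Icc 1 (n - 2) | Odd j} = {j ∈ Ico 1 n | Odd j} := by
  ext j
  simp only [mem_filter, mem_Icc, mem_Ico]
  obtain ⟨m, rfl⟩ := hn
  constructor <;> rintro ⟨h, ⟨i, rfl⟩⟩ <;> exact ⟨by omega, i, rfl⟩

section PadicNorm

variable {p : ℕ} [hp : Fact p.Prime]

theorem ratModEq_of_padicNorm_sub_lt_one {x y : ℚ} (h : padicNorm p (x - y) < 1) :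
    ratModEq p x y := by
  by_contra hndvd
  have hnum : padicNorm p (x - y).num = 1 := (padicNorm.int_eq_one_iff _).2 hndvd
  have hden : 0 < padicNorm p (x - y).den :=
    (padicNorm.nonneg _).lt_of_ne' (padicNorm.nonzero (by exact_mod_cast (x - y).den_ne_zero))
  rw [← Rat.num_div_den (x - y), padicNorm.div, hnum] at h
  exact h.not_ge (one_le_one_div hden (padicNorm.of_nat _))

theorem padicNorm_natCast_eq_one_of_lt {k : ℕ} (hk0 : 0 < k) (hkp : k < p) :
    padicNorm p k = 1 :=
  (padicNorm.nat_eq_one_iff k).2 fun h => (Nat.le_of_dvd hk0 h).not_gt hkp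

theorem padicNorm_two_mul (hp2 : p ≠ 2) (x : ℚ) : padicNorm p (2 * x) = padicNorm p x := by
  have h2 : padicNorm p (2 : ℕ) = 1 :=
    (padicNorm.nat_eq_one_iff 2).2 fun h =>
      hp2 ((Nat.prime_dvd_prime_iff_eq hp.out Nat.prime_two).1 h)
  rw [padicNorm.mul, ← Nat.cast_ofNat, h2, one_mul]

theorem padicNorm_choose_div_self_sub_lt_one {k : ℕ} (hk0 : 0 < k) (hkp : k < p) :
    padicNorm p ((p.choose k : ℚ) / p - (-1) ^ (k + 1) / k) < 1 := by
  have hcong : (p : ℤ) ∣ (p - 1).choose (k - 1) - (-1) ^ (k - 1) := by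
    rw [← ZMod.intCast_zmod_eq_zero_iff_dvd]
    push_cast
    rw [hp.out.choose_pred_eq_neg_one_pow (by omega), sub_self]
  have hsign : (-1 : ℚ) ^ (k + 1) = (-1) ^ (k - 1) := by
    rw [show k + 1 = k - 1 + 2 by omega, pow_add]
    norm_num
  rw [choose_div_self_eq hp.out.pos hk0, hsign, ← sub_div, padicNorm.div,
    padicNorm_natCast_eq_one_of_lt hk0 hkp, div_one]
  exact_mod_cast (padicNorm.int_lt_one_iff _).2 hcong

theorem padicNorm_two_mul_fermat_quotient_two_sub_lt_one :
    padicNorm p (2 * ((2 ^ (p - 1) - 1 : ℚ) / p) - ∑ k ∈ Ico 1 p, (-1 : ℚ) ^ (k + 1) / k) < 1 := by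
  rw [two_mul_fermat_quotient_two_eq hp.out.pos, ← sum_sub_distrib]
  refine padicNorm.sum_lt' (fun k hk => ?_) one_pos
  rw [mem_Ico] at hk
  exact padicNorm_choose_div_self_sub_lt_one hk.1 hk.2

theorem padicNorm_sum_Ico_one_div_lt_one (hp2 : p ≠ 2) :
    padicNorm p (∑ k ∈ Ico 1 p, (1 : ℚ) / k) < 1 := by
  have hreflect := sum_Ico_reflect (fun k => (1 : ℚ) / k) 1 (Nat.le_succ p)
  rw [Nat.add_sub_cancel_left, Nat.add_sub_cancel] at hreflect
  rw [← padicNorm_two_mul hp2, two_mul]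
  nth_rewrite 2 [← hreflect]
  rw [← sum_add_distrib]
  refine padicNorm.sum_lt' (fun k hk => ?_) one_pos
  rw [mem_Ico] at hk
  have hpair : (1 : ℚ) / k + 1 / ((p - k : ℕ) : ℚ) = p / (k * (p - k : ℕ)) := by
    rw [Nat.cast_sub hk.2.le]
    have : (k : ℚ) ≠ 0 := by exact_mod_cast (by omega : k ≠ 0)
    have : (p : ℚ) - k ≠ 0 := sub_ne_zero.2 (by exact_mod_cast hk.2.ne')
    field_simp
    ring
  rw [hpair, padicNorm.div, padicNorm.mul, padicNorm.padicNorm_p_of_prime,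
    padicNorm_natCast_eq_one_of_lt hk.1 hk.2,
    padicNorm_natCast_eq_one_of_lt (Nat.sub_pos_of_lt hk.2) (Nat.sub_lt hp.out.pos hk.1)]
  simpa using inv_lt_one_of_one_lt₀ (by exact_mod_cast hp.out.one_lt : (1 : ℚ) < p)

end PadicNorm

theorem fermat_quotient_eisenstein (p : ℕ) (hp : p.Prime) (hodd : Odd p) :
    ratModEq p ((2 ^ (p - 1) - 1 : ℚ) / p)
      (∑ j ∈ (Finset.Icc 1 (p - 2)).filter (fun j => Odd j), (1 : ℚ) / j) ∧
    ratModEq p ((2 ^ (p - 1) - 1 : ℚ) / p)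
      (-(1 / 2) * ∑ j ∈ Finset.Icc 1 ((p - 1) / 2), (1 : ℚ) / j) := by
  have : Fact p.Prime := ⟨hp⟩
  have hp2 : p ≠ 2 := hodd.ne_two_of_dvd_nat dvd_rfl
  have hU := sum_filter_even_Ico_one_div p
  rw [filter_odd_Icc_sub_two hodd]
  set q : ℚ := (2 ^ (p - 1) - 1 : ℚ) / p
  set T := ∑ k ∈ Ico 1 p with Odd k, (1 : ℚ) / k
  set E := ∑ k ∈ Ico 1 p with Even k, (1 : ℚ) / k
  have hq : padicNorm p (2 * q - (T - E)) < 1 := by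
    rw [← sum_neg_one_pow_succ_div]
    exact padicNorm_two_mul_fermat_quotient_two_sub_lt_one
  have hH : padicNorm p (T + E) < 1 := by
    rw [sum_filter_odd_add_sum_filter_even]
    exact padicNorm_sum_Ico_one_div_lt_one hp2
  constructor <;> refine ratModEq_of_padicNorm_sub_lt_one ?_ <;> rw [← padicNorm_two_mul hp2]
  · rw [show 2 * (q - T) = (2 * q - (T - E)) - (T + E) by ring]
    exact padicNorm.sub.trans_lt (max_lt hq hH)
  · rw [show 2 * (q - -(1 / 2) * ∑ j ∈ Icc 1 ((p - 1) / 2), (1 : ℚ) / j)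
        = (2 * q - (T - E)) + (T + E) by linear_combination (-2 : ℚ) * hU]
    exact padicNorm.nonarchimedean.trans_lt (max_lt hq hH)
end

section
/- Let p be a prime with p ≥ 5. Then ∑_{r odd, 1 ≤ r < p} binomial(p, r)/(p·r) ≡ 0 (mod p). -/
open Finset

theorem ratModEq_zero_of_mul_eq {m : ℕ} {x : ℚ} {n a : ℤ} (hn : IsCoprime (m : ℤ) n)
    (ha : (m : ℤ) ∣ a) (h : x * n = a) : ratModEq m x 0 := by
  have hnum : x.num * n = a * x.den := by
    have := x.mul_den_eq_num
    exact_mod_cast (by rw [← this, ← h]; ring : (x.num : ℚ) * n = a * x.den)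
  rw [ratModEq, sub_zero]
  exact hn.dvd_of_dvd_mul_right (hnum ▸ ha.mul_right _)

theorem ratModEq_sum_div_zero {ι : Type*} {p : ℕ} [hp : Fact p.Prime] (s : Finset ι)
    (a b : ι → ℤ) (hb : ∀ i ∈ s, (b i : ZMod p) ≠ 0) (h : ∑ i ∈ s, (a i : ZMod p) / b i = 0) :
    ratModEq p (∑ i ∈ s, (a i : ℚ) / b i) 0 := by
  set N := ∏ i ∈ s, b i
  have hdvd : ∀ i ∈ s, b i ∣ N := fun i hi => dvd_prod_of_mem b hi
  have hN : (N : ZMod p) ≠ 0 := by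
    rw [Int.cast_prod]; exact prod_ne_zero_iff.2 hb
  have hbQ : ∀ i ∈ s, (b i : ℚ) ≠ 0 := fun i hi hzero =>
    hb i hi (by rw [Int.cast_eq_zero.1 hzero, Int.cast_zero])
  refine ratModEq_zero_of_mul_eq (n := N) (a := ∑ i ∈ s, a i * (N / b i)) ?_ ?_ ?_
  · rw [(Nat.prime_iff_prime_int.mp hp.out).coprime_iff_not_dvd,
      ← ZMod.intCast_zmod_eq_zero_iff_dvd]
    exact hN
  · rw [← ZMod.intCast_zmod_eq_zero_iff_dvd, Int.cast_sum]
    calc ∑ i ∈ s, ((a i * (N / b i) : ℤ) : ZMod p) = ∑ i ∈ s, N * ((a i : ZMod p) / b i) :=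
          sum_congr rfl fun i hi => by
            rw [Int.cast_mul, Int.cast_div (hdvd i hi) (hb i hi)]; ring
      _ = 0 := by rw [← mul_sum, h, mul_zero]
  · rw [sum_mul, Int.cast_sum]
    refine sum_congr rfl fun i hi => ?_
    rw [Int.cast_mul, Int.cast_div (hdvd i hi) (hbQ i hi)]; ring

theorem Nat.cast_choose_div_mul_eq {n r : ℕ} (hn : 0 < n) (hr : 0 < r) :
    (n.choose r : ℚ) / (n * r) = (n - 1).choose (r - 1) / r ^ 2 := by
  obtain ⟨m, rfl⟩ := Nat.exists_eq_add_of_lt hn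
  obtain ⟨k, rfl⟩ := Nat.exists_eq_add_of_lt hr
  have h : ((m + 1 : ℕ) : ℚ) * m.choose k = (m + 1).choose (k + 1) * (k + 1 : ℕ) := by
    exact_mod_cast Nat.add_one_mul_choose_eq m k
  simp only [zero_add, add_tsub_cancel_right]
  push_cast at h ⊢
  field_simp
  linear_combination h.symm

theorem ZMod.natCast_ne_zero_of_pos_of_lt {n a : ℕ} (ha : 0 < a) (han : a < n) :
    (a : ZMod n) ≠ 0 :=
  (ZMod.natCast_eq_zero_iff a n).not.2 (Nat.not_dvd_of_pos_of_lt ha han)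

theorem ZMod.natCast_choose_pred {p : ℕ} [hp : Fact p.Prime] {k : ℕ} (hk : k < p) :
    ((p - 1).choose k : ZMod p) = (-1) ^ k := by
  induction k with
  | zero => simp
  | succ k ih =>
    have hpascal : (p - 1).choose k + (p - 1).choose (k + 1) = p.choose (k + 1) := by
      rw [← Nat.choose_succ_succ', Nat.sub_add_cancel hp.out.one_le]
    have hdvd : (p.choose (k + 1) : ZMod p) = 0 :=
      (ZMod.natCast_eq_zero_iff _ _).2 (hp.out.dvd_choose_self k.succ_ne_zero hk)
    have hcast := congrArg (Nat.cast : ℕ → ZMod p) hpascal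
    push_cast at hcast
    linear_combination hcast + hdvd - ih (by omega)

theorem ZMod.sum_Icc_natCast_eq_sum {M : Type*} [AddCommMonoid M] {n : ℕ} [NeZero n]
    (f : ZMod n → M) (hf : f 0 = 0) : ∑ r ∈ Icc 1 (n - 1), f r = ∑ x, f x := by
  rw [← sum_erase univ hf]
  refine sum_nbij' (↑) ZMod.val (fun r hr => ?_) (fun x hx => ?_) (fun r hr => ?_)
    (fun x _ => ZMod.natCast_zmod_val x) (fun _ _ => rfl)
  · simp only [mem_Icc] at hr
    simpa using ZMod.natCast_ne_zero_of_pos_of_lt (n := n) (by omega) (by omega)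
  · have := ZMod.val_lt x
    simp only [mem_erase, mem_univ, and_true, ← ZMod.val_ne_zero] at hx
    simp only [mem_Icc]
    omega
  · simp only [mem_Icc] at hr
    exact ZMod.val_cast_of_lt (by omega)

theorem FiniteField.sum_inv_pow_lt_card_sub_one {K : Type*} [Field K] [Fintype K] {i : ℕ}
    (h : i < Fintype.card K - 1) : ∑ x : K, (x ^ i)⁻¹ = 0 := by
  rw [← FiniteField.sum_pow_lt_card_sub_one (K := K) i h]
  exact Fintype.sum_equiv (Equiv.inv K) _ _ fun x => (inv_pow x i).symm

theorem Finset.sum_Icc_filter_odd_eq_sum_filter_even {M : Type*} [AddCommMonoid M] {n : ℕ}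
    (hn : Odd n) {f : ℕ → M} (hf : ∀ r ≤ n, f (n - r) = f r) :
    ∑ r ∈ (Icc 1 (n - 1)).filter Odd, f r = ∑ r ∈ (Icc 1 (n - 1)).filter Even, f r := by
  refine sum_nbij' (n - ·) (n - ·) (fun r hr => ?_) (fun r hr => ?_) (fun r hr => ?_)
    (fun r hr => ?_) (fun r hr => ?_) <;> simp only [mem_filter, mem_Icc] at hr ⊢
  · exact ⟨by omega, Nat.Odd.sub_odd hn hr.2⟩
  · exact ⟨by omega, Nat.Odd.sub_even (by omega) hn hr.2⟩
  · omega
  · omega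
  · exact (hf r (by omega)).symm

theorem ZMod.sum_Icc_filter_odd_inv_sq_eq_zero {p : ℕ} [hp : Fact p.Prime] (hp5 : 5 ≤ p) :
    ∑ r ∈ (Icc 1 (p - 1)).filter Odd, ((r : ZMod p) ^ 2)⁻¹ = 0 := by
  have htotal : ∑ r ∈ Icc 1 (p - 1), ((r : ZMod p) ^ 2)⁻¹ = 0 := by
    rw [ZMod.sum_Icc_natCast_eq_sum (fun x => (x ^ 2)⁻¹) (by simp)]
    exact FiniteField.sum_inv_pow_lt_card_sub_one (by rw [ZMod.card]; omega)
  have hsymm : ∀ r ≤ p, (((p - r : ℕ) : ZMod p) ^ 2)⁻¹ = ((r : ZMod p) ^ 2)⁻¹ := fun r hr => by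
    rw [Nat.cast_sub hr, ZMod.natCast_self, zero_sub, neg_sq]
  have htwo : (2 : ZMod p) ≠ 0 := by
    exact_mod_cast ZMod.natCast_ne_zero_of_pos_of_lt (n := p) two_pos (by omega)
  have hsplit := sum_filter_add_sum_filter_not (Icc 1 (p - 1)) Odd fun r => ((r : ZMod p) ^ 2)⁻¹
  simp only [Nat.not_odd_iff_even] at hsplit
  rw [← sum_Icc_filter_odd_eq_sum_filter_even (hp.out.odd_of_ne_two (by omega)) hsymm,
    ← two_mul, htotal] at hsplit
  exact (mul_eq_zero.1 hsplit).resolve_left htwo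

theorem binomial_odd_sum_vanishes (p : ℕ) (hp : p.Prime) (hp5 : 5 ≤ p) :
    ratModEq p
      (∑ r ∈ (Finset.Icc 1 (p - 1)).filter (fun r => Odd r),
        (p.choose r : ℚ) / (p * r)) 0 := by
  have := Fact.mk hp
  have hmem : ∀ r ∈ (Icc 1 (p - 1)).filter (fun r => Odd r), 0 < r ∧ r < p ∧ Odd r :=
    fun r hr => by simp only [mem_filter, mem_Icc] at hr; exact ⟨by omega, by omega, hr.2⟩
  have hterm : ∀ r ∈ (Icc 1 (p - 1)).filter (fun r => Odd r),
      (p.choose r : ℚ) / (p * r) = (((p - 1).choose (r - 1) : ℤ) : ℚ) / ((r ^ 2 : ℤ) : ℚ) :=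
    fun r hr => by push_cast; exact Nat.cast_choose_div_mul_eq hp.pos (hmem r hr).1
  rw [sum_congr rfl hterm]
  refine ratModEq_sum_div_zero _ (fun r => (p - 1).choose (r - 1)) (fun r => r ^ 2)
    (fun r hr => ?_) ?_
  · push_cast
    exact pow_ne_zero 2 (ZMod.natCast_ne_zero_of_pos_of_lt (hmem r hr).1 (hmem r hr).2.1)
  · calc ∑ r ∈ (Icc 1 (p - 1)).filter (fun r => Odd r),
          (((p - 1).choose (r - 1) : ℤ) : ZMod p) / ((r ^ 2 : ℤ) : ZMod p)
        = ∑ r ∈ (Icc 1 (p - 1)).filter Odd, ((r : ZMod p) ^ 2)⁻¹ :=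
          sum_congr rfl fun r hr => by
            obtain ⟨-, hrp, hodd⟩ := hmem r hr
            push_cast
            rw [ZMod.natCast_choose_pred (by omega),
              (Nat.Odd.sub_odd hodd odd_one).neg_one_pow, one_div]
      _ = 0 := ZMod.sum_Icc_filter_odd_inv_sq_eq_zero hp5
end

section
/- Let n and j be positive integers with 1 ≤ j ≤ n. Then ∑_{l=0}^{j-1} (-1)^(j-l-1) · binomial(n-l-1, n-j) · binomial(n, l) · 1/(n-l)^2 = (H_n − H_{n-j})^2 / 2 + (H_n^{(2)} − H_{n-j}^{(2)}) / 2. -/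
/-!
Put `m = n - j` and `k = n - l`; the sum becomes `S₂(m, n)`, where
`Sₚ(m, N) = altChooseSum p m N = ∑_{k=m+1}^N (-1)^(k-m-1) C(k-1, m) C(N, k) / k^p`.
Pascal's rule and `C(N, k-1) = k C(N+1, k) / (N+1)` give the recursion
`Sₚ₊₁(m, N+1) = Sₚ₊₁(m, N) + Sₚ(m, N+1) / (N+1)`, while `S₀(m, N) = 1` for `N > m` by binomial
inversion `∑ᵢ (-1)^(i-m) C(i, m) C(N, i) = δ_{N,m}`. Hence `S₁(m, N) = H_N - H_m`, and summing
`(H_{N+1} - H_m) / (N+1)` once more gives the claimed closed form for `S₂`.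
-/

/-- `harmonic' r k` is the `k`-th harmonic number of order `r`, i.e. `∑_{i=1}^k 1/i^r`. -/
def harmonic' (r k : ℕ) : ℚ := ∑ i ∈ Finset.Icc 1 k, 1 / (i : ℚ) ^ r

open Finset

lemma harmonic'_succ (r k : ℕ) :
    harmonic' r (k + 1) = harmonic' r k + 1 / ((k : ℚ) + 1) ^ r := by
  rw [harmonic', harmonic', sum_Icc_succ_top (by omega)]
  push_cast
  rfl

lemma sum_Icc_neg_one_pow_mul_choose_mul_choose (m N : ℕ) :
    ∑ i ∈ Icc m N, (-1 : ℚ) ^ (i - m) * (i.choose m : ℚ) * (N.choose i : ℚ) =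
      if N = m then 1 else 0 := by
  rcases lt_or_ge N m with hNm | hmN
  · rw [Icc_eq_empty (by omega), sum_empty, if_neg (by omega)]
  have hterm : ∀ t ∈ range (N + 1 - m),
      (-1 : ℚ) ^ (m + t - m) * ((m + t).choose m : ℚ) * (N.choose (m + t) : ℚ) =
        (N.choose m : ℚ) * ((-1 : ℤ) ^ t * ((N - m).choose t : ℤ) : ℤ) := by
    intro t _
    have h : (N.choose (m + t) : ℚ) * ((m + t).choose m : ℚ) = N.choose m * (N - m).choose t := by
      have := Nat.choose_mul (n := N) (Nat.le_add_right m t)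
      rw [Nat.add_sub_cancel_left] at this
      exact_mod_cast this
    rw [Nat.add_sub_cancel_left]
    push_cast
    linear_combination (-1 : ℚ) ^ t * h
  rw [← Ico_add_one_right_eq_Icc, sum_Ico_eq_sum_range, sum_congr rfl hterm, ← mul_sum,
    ← Int.cast_sum, Nat.succ_sub hmN, Int.alternating_sum_range_choose]
  by_cases h : N = m
  · subst h; simp
  · rw [if_neg (by omega), if_neg h]; simp

def altChooseSum (p m N : ℕ) : ℚ :=
  ∑ k ∈ Ioc m N, (-1 : ℚ) ^ (k - m - 1) * ((k - 1).choose m : ℚ) * (N.choose k : ℚ) / (k : ℚ) ^ p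

lemma altChooseSum_self (p m : ℕ) : altChooseSum p m m = 0 := by
  simp [altChooseSum]

lemma sum_Ioc_succ_top_mul_choose (f : ℕ → ℚ) (m N : ℕ) :
    ∑ k ∈ Ioc m (N + 1), f k * (N.choose k : ℚ) = ∑ k ∈ Ioc m N, f k * (N.choose k : ℚ) := by
  refine (sum_subset (Ioc_subset_Ioc_right N.le_succ) fun k hk hkN => ?_).symm
  simp only [mem_Ioc] at hk hkN
  rw [Nat.choose_eq_zero_of_lt (by omega), Nat.cast_zero, mul_zero]

lemma altChooseSum_zero_succ (m N : ℕ) :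
    altChooseSum 0 m (N + 1) = altChooseSum 0 m N + if N = m then 1 else 0 := by
  have hpascal : ∀ k ∈ Ioc m (N + 1),
      (-1 : ℚ) ^ (k - m - 1) * ((k - 1).choose m : ℚ) * ((N + 1).choose k : ℚ) =
        (-1 : ℚ) ^ (k - 1 - m) * ((k - 1).choose m : ℚ) * (N.choose (k - 1) : ℚ) +
          (-1 : ℚ) ^ (k - m - 1) * ((k - 1).choose m : ℚ) * (N.choose k : ℚ) := by
    intro k hk
    rw [mem_Ioc] at hk
    rw [Nat.choose_succ_left N k (by omega), Nat.sub_right_comm]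
    push_cast
    ring
  have hshift : ∑ k ∈ Ioc m (N + 1),
      (-1 : ℚ) ^ (k - 1 - m) * ((k - 1).choose m : ℚ) * (N.choose (k - 1) : ℚ) =
        ∑ i ∈ Icc m N, (-1 : ℚ) ^ (i - m) * (i.choose m : ℚ) * (N.choose i : ℚ) := by
    rw [← Icc_add_one_left_eq_Ioc, ← map_add_right_Icc m N 1, sum_map]
    simp only [addRightEmbedding_apply, Nat.add_sub_cancel]
  simp only [altChooseSum, pow_zero, div_one]
  rw [sum_congr rfl hpascal, sum_add_distrib, hshift, sum_Icc_neg_one_pow_mul_choose_mul_choose,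
    sum_Ioc_succ_top_mul_choose (fun k => (-1 : ℚ) ^ (k - m - 1) * ((k - 1).choose m : ℚ)),
    add_comm]

lemma choose_succ_div_pow_succ (N k p : ℕ) (hk : 0 < k) :
    ((N + 1).choose k : ℚ) / (k : ℚ) ^ (p + 1) =
      (N.choose k : ℚ) / (k : ℚ) ^ (p + 1) +
        ((N + 1).choose k : ℚ) / (k : ℚ) ^ p / ((N : ℚ) + 1) := by
  obtain ⟨k, rfl⟩ := Nat.exists_eq_add_of_le' hk
  have hmul : ((N : ℚ) + 1) * (N.choose k : ℚ) = ((N + 1).choose (k + 1) : ℚ) * ((k : ℚ) + 1) := by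
    exact_mod_cast Nat.add_one_mul_choose_eq N k
  have hpascal : ((N + 1).choose (k + 1) : ℚ) = N.choose k + N.choose (k + 1) := by
    exact_mod_cast Nat.choose_succ_succ' N k
  push_cast
  field_simp
  linear_combination (k + 1 : ℚ) ^ p * (hmul + (N + 1 : ℚ) * hpascal)

lemma altChooseSum_succ_succ (p m N : ℕ) :
    altChooseSum (p + 1) m (N + 1) =
      altChooseSum (p + 1) m N + altChooseSum p m (N + 1) / ((N : ℚ) + 1) := by
  have hterm : ∀ k ∈ Ioc m (N + 1),
      (-1 : ℚ) ^ (k - m - 1) * ((k - 1).choose m : ℚ) * ((N + 1).choose k : ℚ) / (k : ℚ) ^ (p + 1) =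
        (-1 : ℚ) ^ (k - m - 1) * ((k - 1).choose m : ℚ) / (k : ℚ) ^ (p + 1) * (N.choose k : ℚ) +
          (-1 : ℚ) ^ (k - m - 1) * ((k - 1).choose m : ℚ) * ((N + 1).choose k : ℚ) / (k : ℚ) ^ p /
            ((N : ℚ) + 1) := by
    intro k hk
    rw [mem_Ioc] at hk
    rw [mul_div_assoc, choose_succ_div_pow_succ N k p (by omega)]
    ring
  rw [altChooseSum, altChooseSum, altChooseSum, sum_congr rfl hterm, sum_add_distrib,
    sum_Ioc_succ_top_mul_choose, sum_div]
  congr 1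
  exact sum_congr rfl fun k _ => by ring

lemma altChooseSum_zero_of_lt {m N : ℕ} (h : m < N) : altChooseSum 0 m N = 1 := by
  induction N, h using Nat.le_induction with
  | base => rw [altChooseSum_zero_succ, altChooseSum_self, if_pos rfl, zero_add]
  | succ N hN ih => rw [altChooseSum_zero_succ, ih, if_neg (by omega), add_zero]

lemma altChooseSum_one {m N : ℕ} (h : m ≤ N) :
    altChooseSum 1 m N = harmonic' 1 N - harmonic' 1 m := by
  induction N, h using Nat.le_induction with
  | base => rw [altChooseSum_self, sub_self]
  | succ N hN ih =>
    rw [altChooseSum_succ_succ, ih, altChooseSum_zero_of_lt (by omega), harmonic'_succ]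
    ring

lemma altChooseSum_two {m N : ℕ} (h : m ≤ N) :
    altChooseSum 2 m N =
      (harmonic' 1 N - harmonic' 1 m) ^ 2 / 2 + (harmonic' 2 N - harmonic' 2 m) / 2 := by
  induction N, h using Nat.le_induction with
  | base => rw [altChooseSum_self]; ring
  | succ N hN ih =>
    rw [altChooseSum_succ_succ, ih, altChooseSum_one (by omega), harmonic'_succ, harmonic'_succ]
    field_simp
    ring

theorem binomial_sum_inverse_square_general (n j : ℕ) (hjn : j ≤ n) :
    ∑ l ∈ Finset.range j,
        (-1 : ℚ) ^ (j - l - 1) * ((n - l - 1).choose (n - j) : ℚ) * (n.choose l : ℚ) *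
          (1 / ((n - l : ℕ) : ℚ) ^ 2) =
      (harmonic' 1 n - harmonic' 1 (n - j)) ^ 2 / 2 +
        (harmonic' 2 n - harmonic' 2 (n - j)) / 2 := by
  rw [← altChooseSum_two (Nat.sub_le n j), altChooseSum]
  refine sum_nbij' (n - ·) (n - ·) (by intro l; simp only [mem_range, mem_Ioc]; omega)
    (by intro k; simp only [mem_range, mem_Ioc]; omega) (by intro l; simp only [mem_range]; omega)
    (by intro k; simp only [mem_Ioc]; omega) fun l hl => ?_
  rw [mem_range] at hl
  rw [show n - l - (n - j) - 1 = j - l - 1 by omega, Nat.choose_symm (by omega)]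
  ring

theorem binomial_sum_inverse_square (n j : ℕ) (hj : 1 ≤ j) (hjn : j ≤ n) :
    ∑ l ∈ Finset.range j,
        (-1 : ℚ) ^ (j - l - 1) * ((n - l - 1).choose (n - j) : ℚ) * (n.choose l : ℚ) *
          (1 / ((n - l : ℕ) : ℚ) ^ 2) =
      (harmonic' 1 n - harmonic' 1 (n - j)) ^ 2 / 2 +
        (harmonic' 2 n - harmonic' 2 (n - j)) / 2 :=
  binomial_sum_inverse_square_general n j hjn
end
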